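/- arXiv:2001.09297 — 4 statements merged into one kernel-verified Lean document; each statement's English description precedes it below -/
import Mathlib

section
/- Let a unit job shop instance on K machines with n jobs be given, where job j is the machine sequence M_j^1,…,M_j^{q_j}, with release dates r_j and deadlines δ_j, and where jobs may wait between machines. For every assignment x of real start times x_j^i, x is a feasible job shop schedule satisfying the deadline constraints x_j^{q_j} ≤ δ_j if and only if the same numbers, read as arrival time stamps t_j^i = x_j^i, form a VSP-feasible schedule of the constructed VSP instance with trip request times ρ_j = r_j, hard deadlines d'_j = δ_j, minimum travel times 1, no maximum travel time constraints, and separation constants 1. -/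
/-- For a unit job shop instance on `K` machines with `n` jobs
(job `j` being the machine sequence `M j 0, …, M j (q j - 1)`, release dates `r`,
deadlines `δ`, jobs may wait between machines), an assignment `x` of real start
times is a feasible job shop schedule meeting the deadlines iff the same numbers,
read as arrival time stamps `t = x`, form a VSP-feasible schedule of the
constructed VSP instance (walks given by the machine sequences, trip request
times `r`, hard deadlines `δ`, minimum travel times `1`, no maximum travel time
constraints, separation constants `1`). -/
theorem jobshop_feasible_iff_vsp_feasible
    (K n : ℕ) (q : Fin n → ℕ) (hq : ∀ j, 0 < q j)
    (M : (j : Fin n) → Fin (q j) → Fin K)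
    (r δ : Fin n → ℝ)
    (x : (j : Fin n) → Fin (q j) → ℝ) :
    -- feasible job shop schedule satisfying the deadline constraints
    ((∀ (j : Fin n) (i : Fin (q j)) (h : i.val + 1 < q j),
        x j i + 1 ≤ x j ⟨i.val + 1, h⟩) ∧
     (∀ (j1 j2 : Fin n) (i1 : Fin (q j1)) (i2 : Fin (q j2)),
        j1 ≠ j2 → M j1 i1 = M j2 i2 → |x j1 i1 - x j2 i2| ≥ 1) ∧
     (∀ j : Fin n, x j ⟨0, hq j⟩ ≥ r j) ∧
     (∀ j : Fin n, x j ⟨q j - 1, Nat.sub_lt (hq j) Nat.one_pos⟩ ≤ δ j))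
    ↔
    -- VSP-feasible schedule `t = x` of the constructed instance
    ((∀ j : Fin n, r j ≤ x j ⟨0, hq j⟩) ∧
     (∀ (j : Fin n) (i : Fin (q j)) (h : i.val + 1 < q j),
        x j i ≤ x j ⟨i.val + 1, h⟩) ∧
     (∀ j : Fin n, x j ⟨q j - 1, Nat.sub_lt (hq j) Nat.one_pos⟩ ≤ δ j) ∧
     (∀ (j : Fin n) (i : Fin (q j)) (h : i.val + 1 < q j),
        (1 : ℝ) ≤ x j ⟨i.val + 1, h⟩ - x j i) ∧
     (∀ (j1 j2 : Fin n) (i1 : Fin (q j1)) (i2 : Fin (q j2)),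
        j1 ≠ j2 → M j1 i1 = M j2 i2 → |x j1 i1 - x j2 i2| ≥ 1)) := by
  constructor
  · rintro ⟨h1, h2, h3, h4⟩
    exact ⟨h3, fun j i h => by linarith [h1 j i h], h4,
      fun j i h => by linarith [h1 j i h], h2⟩
  · rintro ⟨h1, h2, h3, h4, h5⟩
    exact ⟨fun j i h => by linarith [h4 j i h], h5, h1, h3⟩
end

section
/- Let a unit job shop instance on K machines with n jobs be given, where job j is the machine sequence M_j^1,…,M_j^{q_j}, with release dates r_j and deadlines δ_j, and where jobs cannot wait between machines (no-wait condition). For every assignment x of real start times x_j^i, x is a feasible job shop schedule satisfying the no-wait condition x_j^i + 1 = x_j^{i+1} and the deadline constraints x_j^{q_j} ≤ δ_j if and only if the same numbers, read as arrival time stamps t_j^i = x_j^i, form a VSP-feasible schedule of the constructed VSP instance with trip request times ρ_j = r_j, hard deadlines d'_j = δ_j, minimum travel times 1, maximum travel times 1, and separation constants 1. -/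
/-- For a unit job shop instance on `K` machines with `n` jobs
(job `j` being the machine sequence `M j 0, …, M j (q j - 1)`, release dates `r`,
deadlines `δ`, jobs cannot wait between machines), an assignment `x` of real
start times is a feasible job shop schedule satisfying the no-wait condition
`x j i + 1 = x j (i+1)` and the deadlines iff the same numbers, read as arrival
time stamps `t = x`, form a VSP-feasible schedule of the constructed VSP
instance (walks given by the machine sequences, trip request times `r`, hard
deadlines `δ`, minimum travel times `1`, maximum travel times `1`, separation
constants `1`). -/
theorem nowait_jobshop_feasible_iff_vsp_feasible
    (K n : ℕ) (q : Fin n → ℕ) (hq : ∀ j, 0 < q j)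
    (M : (j : Fin n) → Fin (q j) → Fin K)
    (r δ : Fin n → ℝ)
    (x : (j : Fin n) → Fin (q j) → ℝ) :
    ((∀ (j : Fin n) (i : Fin (q j)) (h : i.val + 1 < q j),
        x j i + 1 ≤ x j ⟨i.val + 1, h⟩) ∧
     (∀ (j1 j2 : Fin n) (i1 : Fin (q j1)) (i2 : Fin (q j2)),
        j1 ≠ j2 → M j1 i1 = M j2 i2 → |x j1 i1 - x j2 i2| ≥ 1) ∧
     (∀ j : Fin n, x j ⟨0, hq j⟩ ≥ r j) ∧
     (∀ (j : Fin n) (i : Fin (q j)) (h : i.val + 1 < q j),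
        x j i + 1 = x j ⟨i.val + 1, h⟩) ∧
     (∀ j : Fin n, x j ⟨q j - 1, Nat.sub_lt (hq j) Nat.one_pos⟩ ≤ δ j))
    ↔
    -- VSP-feasible schedule `t = x` of the constructed instance
    ((∀ j : Fin n, r j ≤ x j ⟨0, hq j⟩) ∧
     (∀ (j : Fin n) (i : Fin (q j)) (h : i.val + 1 < q j),
        x j i ≤ x j ⟨i.val + 1, h⟩) ∧
     (∀ j : Fin n, x j ⟨q j - 1, Nat.sub_lt (hq j) Nat.one_pos⟩ ≤ δ j) ∧
     (∀ (j : Fin n) (i : Fin (q j)) (h : i.val + 1 < q j),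
        (1 : ℝ) ≤ x j ⟨i.val + 1, h⟩ - x j i) ∧
     (∀ (j : Fin n) (i : Fin (q j)) (h : i.val + 1 < q j),
        x j ⟨i.val + 1, h⟩ - x j i ≤ (1 : ℝ)) ∧
     (∀ (j1 j2 : Fin n) (i1 : Fin (q j1)) (i2 : Fin (q j2)),
        j1 ≠ j2 → M j1 i1 = M j2 i2 → |x j1 i1 - x j2 i2| ≥ 1)) := by
  constructor
  · rintro ⟨h1, h2, h3, h4, h5⟩
    refine ⟨fun j => h3 j, fun j i h => by linarith [h1 j i h],
      h5, fun j i h => by linarith [h4 j i h],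
      fun j i h => by linarith [h4 j i h], h2⟩
  · rintro ⟨h1, h2, h3, h4, h5, h6⟩
    exact ⟨fun j i h => by linarith [h4 j i h], h6, fun j => h1 j,
      fun j i h => by linarith [h4 j i h, h5 j i h], h3⟩
end

section
/- Consider a VSP instance with n vehicles, walks W_j^1,…,W_j^{q_j}, trip request times ρ_j, soft deadlines d_j, hard deadlines d'_j, minimum travel times τ_min,j^i, maximum travel times τ_max,j^i, and separation constants s_{j1,j2}^{i1,i2}. Suppose the variables t_j^i, and for each constrained pair ((j1,i1),(j2,i2)) the reals P_{j1,j2}^{i1,i2}, N_{j1,j2}^{i1,i2} and binary b_{j1,j2}^{i1,i2} ∈ {0,1}, and for each j the reals X_j and binary l_j ∈ {0,1}, satisfy all MIP constraints. Then the schedule t is VSP-feasible, and the sum of the l_j is at least the number of tardy vehicles, i.e. the cardinality of {j : t_j^{q_j} > d_j}. -/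
/-- VSP-feasibility of a schedule `t`: trip request time, trip continuity and
hard deadline chain `ρ_j ≤ t_j^1 ≤ … ≤ t_j^{q_j} ≤ d'_j`; travel times
`τmin_j^i ≤ t_j^{i+1} − t_j^i ≤ τmax_j^i`; and separation
`|t_{j1}^{i1} − t_{j2}^{i2}| ≥ s` at coinciding walk vertices. -/
def VSPFeasible {n : ℕ} {V : Type} (q : Fin n → ℕ) (hq : ∀ j, 0 < q j)
    (W : (j : Fin n) → Fin (q j) → V)
    (ρ d' : Fin n → ℝ)
    (τmin τmax : (j : Fin n) → Fin (q j) → ℝ)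
    (s : (j1 j2 : Fin n) → Fin (q j1) → Fin (q j2) → ℝ)
    (t : (j : Fin n) → Fin (q j) → ℝ) : Prop :=
  (∀ j, ρ j ≤ t j ⟨0, hq j⟩) ∧
  (∀ (j : Fin n) (i : Fin (q j)) (h : i.val + 1 < q j), t j i ≤ t j ⟨i.val + 1, h⟩) ∧
  (∀ j, t j ⟨q j - 1, Nat.sub_lt (hq j) Nat.one_pos⟩ ≤ d' j) ∧
  (∀ (j : Fin n) (i : Fin (q j)) (h : i.val + 1 < q j),
      τmin j i ≤ t j ⟨i.val + 1, h⟩ - t j i ∧ t j ⟨i.val + 1, h⟩ - t j i ≤ τmax j i) ∧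
  (∀ (j1 j2 : Fin n) (i1 : Fin (q j1)) (i2 : Fin (q j2)),
      j1 ≠ j2 → W j1 i1 = W j2 i2 → |t j1 i1 - t j2 i2| ≥ s j1 j2 i1 i2)

/-- The MIP constraints of the VSP formulation: the chain, travel-time and
hard-deadline constraints on `t`; the big-M linearization
`t_{j1}^{i1} − t_{j2}^{i2} = P − N`, `b·s ≤ P ≤ b·M`, `(1−b)·s ≤ N ≤ (1−b)·M`
with binary `b` for every constrained pair; and the tardiness constraints
`d_j − t_j^{q_j} ≤ X_j`, `0 ≤ X_j`, `X_j ≤ M_j·(1 − l_j)`,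
`X_j ≤ d_j − t_j^{q_j} + M_j·l_j` with binary `l_j` for every vehicle. -/
def MIPConstraints {n : ℕ} {V : Type} (q : Fin n → ℕ) (hq : ∀ j, 0 < q j)
    (W : (j : Fin n) → Fin (q j) → V)
    (ρ d d' : Fin n → ℝ)
    (τmin τmax : (j : Fin n) → Fin (q j) → ℝ)
    (s Msep : (j1 j2 : Fin n) → Fin (q j1) → Fin (q j2) → ℝ)
    (Mveh : Fin n → ℝ)
    (t : (j : Fin n) → Fin (q j) → ℝ)
    (P N b : (j1 j2 : Fin n) → Fin (q j1) → Fin (q j2) → ℝ)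
    (X l : Fin n → ℝ) : Prop :=
  (∀ j, ρ j ≤ t j ⟨0, hq j⟩) ∧
  (∀ (j : Fin n) (i : Fin (q j)) (h : i.val + 1 < q j), t j i ≤ t j ⟨i.val + 1, h⟩) ∧
  (∀ j, t j ⟨q j - 1, Nat.sub_lt (hq j) Nat.one_pos⟩ ≤ d' j) ∧
  (∀ (j : Fin n) (i : Fin (q j)) (h : i.val + 1 < q j),
      τmin j i ≤ t j ⟨i.val + 1, h⟩ - t j i ∧ t j ⟨i.val + 1, h⟩ - t j i ≤ τmax j i) ∧
  (∀ (j1 j2 : Fin n) (i1 : Fin (q j1)) (i2 : Fin (q j2)),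
      j1 ≠ j2 → W j1 i1 = W j2 i2 →
      (b j1 j2 i1 i2 = 0 ∨ b j1 j2 i1 i2 = 1) ∧
      t j1 i1 - t j2 i2 = P j1 j2 i1 i2 - N j1 j2 i1 i2 ∧
      b j1 j2 i1 i2 * s j1 j2 i1 i2 ≤ P j1 j2 i1 i2 ∧
      P j1 j2 i1 i2 ≤ b j1 j2 i1 i2 * Msep j1 j2 i1 i2 ∧
      (1 - b j1 j2 i1 i2) * s j1 j2 i1 i2 ≤ N j1 j2 i1 i2 ∧
      N j1 j2 i1 i2 ≤ (1 - b j1 j2 i1 i2) * Msep j1 j2 i1 i2) ∧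
  (∀ j, (l j = 0 ∨ l j = 1) ∧
      d j - t j ⟨q j - 1, Nat.sub_lt (hq j) Nat.one_pos⟩ ≤ X j ∧
      0 ≤ X j ∧
      X j ≤ Mveh j * (1 - l j) ∧
      X j ≤ d j - t j ⟨q j - 1, Nat.sub_lt (hq j) Nat.one_pos⟩ + Mveh j * l j)

/-- Any assignment of the MIP variables satisfying all MIP
constraints yields a VSP-feasible schedule `t`, and the sum of the binary
variables `l_j` is at least the number of tardy vehicles
`#{j : t_j^{q_j} > d_j}`. -/
theorem mip_solution_is_vsp_feasible_and_counts_tardy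
    {n : ℕ} {V : Type} (q : Fin n → ℕ) (hq : ∀ j, 0 < q j)
    (W : (j : Fin n) → Fin (q j) → V)
    (ρ d d' : Fin n → ℝ)
    (τmin τmax : (j : Fin n) → Fin (q j) → ℝ)
    (s Msep : (j1 j2 : Fin n) → Fin (q j1) → Fin (q j2) → ℝ)
    (Mveh : Fin n → ℝ)
    (t : (j : Fin n) → Fin (q j) → ℝ)
    (P N b : (j1 j2 : Fin n) → Fin (q j1) → Fin (q j2) → ℝ)
    (X l : Fin n → ℝ)
    (hmip : MIPConstraints q hq W ρ d d' τmin τmax s Msep Mveh t P N b X l) :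
    VSPFeasible q hq W ρ d' τmin τmax s t ∧
    ((Finset.univ.filter
        (fun j : Fin n => d j < t j ⟨q j - 1, Nat.sub_lt (hq j) Nat.one_pos⟩)).card : ℝ)
      ≤ ∑ j, l j := by
  obtain ⟨h1, h2, h3, h4, h5, h6⟩ := hmip
  constructor
  · refine ⟨h1, h2, h3, h4, ?_⟩
    intro j1 j2 i1 i2 hne hW
    obtain ⟨hb, heq, hP1, hP2, hN1, hN2⟩ := h5 j1 j2 i1 i2 hne hW
    rcases hb with hb | hb
    · have hP0 : P j1 j2 i1 i2 = 0 := le_antisymm (by simpa [hb] using hP2)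
        (by rw [hb] at hP1; linarith)
      have hNs : s j1 j2 i1 i2 ≤ N j1 j2 i1 i2 := by simpa [hb] using hN1
      calc s j1 j2 i1 i2 ≤ N j1 j2 i1 i2 := hNs
        _ = -(t j1 i1 - t j2 i2) := by rw [heq, hP0]; ring
        _ ≤ |t j1 i1 - t j2 i2| := neg_le_abs _
    · have hN0 : N j1 j2 i1 i2 = 0 := le_antisymm (by simpa [hb] using hN2)
        (by simpa [hb] using hN1)
      have hPs : s j1 j2 i1 i2 ≤ P j1 j2 i1 i2 := by simpa [hb] using hP1
      calc s j1 j2 i1 i2 ≤ P j1 j2 i1 i2 := hPs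
        _ = t j1 i1 - t j2 i2 := by rw [heq, hN0]; ring
        _ ≤ |t j1 i1 - t j2 i2| := le_abs_self _
  · have hl1 : ∀ j ∈ Finset.univ.filter
        (fun j : Fin n => d j < t j ⟨q j - 1, Nat.sub_lt (hq j) Nat.one_pos⟩),
        (1 : ℝ) ≤ l j := by
      intro j hj
      simp only [Finset.mem_filter] at hj
      obtain ⟨hlb, hX1, hX2, hX3, hX4⟩ := h6 j
      rcases hlb with hl | hl
      · exfalso
        have : X j < 0 := by
          have := hX4
          rw [hl] at this
          linarith [hj.2]
        linarith
      · rw [hl]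
    have hl0 : ∀ j, 0 ≤ l j := by
      intro j
      rcases (h6 j).1 with hl | hl <;> simp [hl]
    calc ((Finset.univ.filter
        (fun j : Fin n => d j < t j ⟨q j - 1, Nat.sub_lt (hq j) Nat.one_pos⟩)).card : ℝ)
        = ∑ j ∈ Finset.univ.filter
            (fun j : Fin n => d j < t j ⟨q j - 1, Nat.sub_lt (hq j) Nat.one_pos⟩), 1 := by
          simp
      _ ≤ ∑ j ∈ Finset.univ.filter
            (fun j : Fin n => d j < t j ⟨q j - 1, Nat.sub_lt (hq j) Nat.one_pos⟩), l j :=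
          Finset.sum_le_sum hl1
      _ ≤ ∑ j, l j := Finset.sum_le_sum_of_subset_of_nonneg (Finset.filter_subset _ _)
          (fun j _ _ => hl0 j)
end

section
/- Consider a VSP instance with n vehicles, walks W_j^1,…,W_j^{q_j}, trip request times ρ_j, soft deadlines d_j, hard deadlines d'_j, minimum travel times τ_min,j^i, maximum travel times τ_max,j^i, and separation constants s_{j1,j2}^{i1,i2} ≥ 0. Suppose the big-M constants satisfy M_{j1,j2}^{i1,i2} ≥ max_j d'_j − min_j ρ_j for every constrained pair, and M_j ≥ max(d_j − ρ_j, d'_j − d_j) for every j. Then for every VSP-feasible schedule t there exist reals P_{j1,j2}^{i1,i2}, N_{j1,j2}^{i1,i2}, binaries b_{j1,j2}^{i1,i2} ∈ {0,1}, reals X_j, and binaries l_j ∈ {0,1} such that all MIP constraints hold and the sum of the l_j equals the number of tardy vehicles, i.e. the cardinality of {j : t_j^{q_j} > d_j}. -/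
/-!
A feasible schedule already satisfies the chain, travel-time and hard-deadline constraints, so
only the linearized variables need to be chosen. For a constrained pair with `u = t₁ - t₂`, take
`P = u⁺`, `N = u⁻` and `b = 1` exactly when `u ≥ 0`; separation gives `s ≤ |u|` and, since every
time stamp lies in `[ρ_j, d'_j]`, `|u| ≤ max d' - min ρ ≤ M`. For a vehicle with slack
`e = d_j - t_j^{q_j}`, take `X = e⁺` and `l = 1` exactly when the vehicle is tardy (`e < 0`);
here `|e| ≤ M_j` because `ρ_j ≤ t_j^{q_j} ≤ d'_j`.
-/

theorem Fin.monotone_of_le_val_succ {α : Type*} [Preorder α] {m : ℕ} {f : Fin m → α}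
    (h : ∀ (i : Fin m) (hi : i.val + 1 < m), f i ≤ f ⟨i.val + 1, hi⟩) : Monotone f := by
  cases m with
  | zero => exact fun a => a.elim0
  | succ m => exact Fin.monotone_iff_le_succ.mpr fun i => h i.castSucc (by simp)

/-- The big-M linearization of `|u| ≥ s` through the split `u = P - N` with binary `b`. -/
def IsBigMSplit (u s M P N b : ℝ) : Prop :=
  (b = 0 ∨ b = 1) ∧ u = P - N ∧ b * s ≤ P ∧ P ≤ b * M ∧ (1 - b) * s ≤ N ∧ N ≤ (1 - b) * M

theorem isBigMSplit_posPart_negPart {u s M : ℝ} (hs : s ≤ |u|) (hM : |u| ≤ M) :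
    IsBigMSplit u s M u⁺ u⁻ (if 0 ≤ u then 1 else 0) := by
  rcases le_or_gt 0 u with hu | hu
  · rw [abs_of_nonneg hu] at hs hM
    simp only [IsBigMSplit, if_pos hu, posPart_of_nonneg hu, negPart_of_nonneg hu]
    refine ⟨by norm_num, by ring, by linarith, by linarith, by norm_num, by norm_num⟩
  · rw [abs_of_neg hu] at hs hM
    simp only [IsBigMSplit, if_neg hu.not_ge, posPart_of_nonpos hu.le, negPart_of_nonpos hu.le]
    refine ⟨by norm_num, by ring, by norm_num, by norm_num, by linarith, by linarith⟩

/-- The big-M linearization of the tardiness indicator `l` of a vehicle with slack `e`. -/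
def IsTardinessIndicator (e M X l : ℝ) : Prop :=
  (l = 0 ∨ l = 1) ∧ e ≤ X ∧ 0 ≤ X ∧ X ≤ M * (1 - l) ∧ X ≤ e + M * l

theorem isTardinessIndicator_posPart {a b M : ℝ} (hM : |a - b| ≤ M) :
    IsTardinessIndicator (a - b) M (a - b)⁺ (if a < b then 1 else 0) := by
  rcases lt_or_ge a b with hab | hab
  · have hneg : a - b ≤ 0 := by linarith
    rw [abs_of_nonpos hneg] at hM
    simp only [IsTardinessIndicator, if_pos hab, posPart_of_nonpos hneg]
    refine ⟨by norm_num, hneg, le_rfl, by norm_num, by linarith⟩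
  · have hnonneg : 0 ≤ a - b := by linarith
    rw [abs_of_nonneg hnonneg] at hM
    simp only [IsTardinessIndicator, if_neg hab.not_gt, posPart_of_nonneg hnonneg]
    refine ⟨by norm_num, le_rfl, hnonneg, by linarith, by linarith⟩

namespace VSPFeasible

variable {n : ℕ} {V : Type} {q : Fin n → ℕ} {hq : ∀ j, 0 < q j} {W : (j : Fin n) → Fin (q j) → V}
  {ρ d' : Fin n → ℝ} {τmin τmax : (j : Fin n) → Fin (q j) → ℝ}
  {s : (j1 j2 : Fin n) → Fin (q j1) → Fin (q j2) → ℝ} {t : (j : Fin n) → Fin (q j) → ℝ}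

theorem mem_Icc (ht : VSPFeasible q hq W ρ d' τmin τmax s t) (j : Fin n) (i : Fin (q j)) :
    t j i ∈ Set.Icc (ρ j) (d' j) := by
  have hmono : Monotone (t j) := Fin.monotone_of_le_val_succ (ht.2.1 j)
  exact ⟨(ht.1 j).trans (hmono (Nat.zero_le _)),
    (hmono (show i ≤ ⟨q j - 1, _⟩ from Nat.le_sub_one_of_lt i.isLt)).trans (ht.2.2.1 j)⟩

theorem abs_sub_le (ht : VSPFeasible q hq W ρ d' τmin τmax s t) {M : ℝ}
    (hM : ∀ j' j'', d' j' - ρ j'' ≤ M) (j1 j2 : Fin n) (i1 : Fin (q j1)) (i2 : Fin (q j2)) :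
    |t j1 i1 - t j2 i2| ≤ M := by
  obtain ⟨hρ₁, hd₁⟩ := ht.mem_Icc j1 i1
  obtain ⟨hρ₂, hd₂⟩ := ht.mem_Icc j2 i2
  exact abs_sub_le_iff.mpr ⟨by linarith [hM j1 j2], by linarith [hM j2 j1]⟩

theorem abs_sub_last_le (ht : VSPFeasible q hq W ρ d' τmin τmax s t) {d : Fin n → ℝ} {M : ℝ}
    (j : Fin n) (hM : d j - ρ j ≤ M ∧ d' j - d j ≤ M) :
    |d j - t j ⟨q j - 1, Nat.sub_lt (hq j) Nat.one_pos⟩| ≤ M := by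
  obtain ⟨hρ, hd⟩ := ht.mem_Icc j ⟨q j - 1, Nat.sub_lt (hq j) Nat.one_pos⟩
  exact abs_sub_le_iff.mpr ⟨by linarith [hM.1], by linarith [hM.2]⟩

end VSPFeasible

theorem vsp_feasible_extends_to_mip_solution_general
    {n : ℕ} {V : Type} (q : Fin n → ℕ) (hq : ∀ j, 0 < q j)
    (W : (j : Fin n) → Fin (q j) → V)
    (ρ d d' : Fin n → ℝ)
    (τmin τmax : (j : Fin n) → Fin (q j) → ℝ)
    (s Msep : (j1 j2 : Fin n) → Fin (q j1) → Fin (q j2) → ℝ)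
    (Mveh : Fin n → ℝ)
    (hMsep : ∀ (j1 j2 : Fin n) (i1 : Fin (q j1)) (i2 : Fin (q j2)),
        j1 ≠ j2 → W j1 i1 = W j2 i2 →
        ∀ j' j'' : Fin n, d' j' - ρ j'' ≤ Msep j1 j2 i1 i2)
    (hMveh : ∀ j : Fin n, d j - ρ j ≤ Mveh j ∧ d' j - d j ≤ Mveh j)
    (t : (j : Fin n) → Fin (q j) → ℝ)
    (ht : VSPFeasible q hq W ρ d' τmin τmax s t) :
    ∃ (P N b : (j1 j2 : Fin n) → Fin (q j1) → Fin (q j2) → ℝ) (X l : Fin n → ℝ),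
      MIPConstraints q hq W ρ d d' τmin τmax s Msep Mveh t P N b X l ∧
      ∑ j, l j =
        ((Finset.univ.filter
            (fun j : Fin n =>
              d j < t j ⟨q j - 1, Nat.sub_lt (hq j) Nat.one_pos⟩)).card : ℝ) := by
  refine ⟨fun j1 j2 i1 i2 => (t j1 i1 - t j2 i2)⁺, fun j1 j2 i1 i2 => (t j1 i1 - t j2 i2)⁻,
    fun j1 j2 i1 i2 => if 0 ≤ t j1 i1 - t j2 i2 then 1 else 0,
    fun j => (d j - t j ⟨q j - 1, Nat.sub_lt (hq j) Nat.one_pos⟩)⁺,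
    fun j => if d j < t j ⟨q j - 1, Nat.sub_lt (hq j) Nat.one_pos⟩ then 1 else 0,
    ⟨ht.1, ht.2.1, ht.2.2.1, ht.2.2.2.1, fun j1 j2 i1 i2 hne hW => ?_, fun j => ?_⟩, ?_⟩
  · exact isBigMSplit_posPart_negPart (ht.2.2.2.2 j1 j2 i1 i2 hne hW)
      (ht.abs_sub_le (hMsep j1 j2 i1 i2 hne hW) j1 j2 i1 i2)
  · exact isTardinessIndicator_posPart (ht.abs_sub_last_le j (hMveh j))
  · simp only [Finset.sum_boole]

/-- If the separation constants are nonnegative, every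
separation big-M constant dominates `max_j d'_j − min_j ρ_j` (expressed as
`d'_{j'} − ρ_{j''} ≤ M` for all vehicles `j', j''`), and each vehicle's big-M
constant dominates both `d_j − ρ_j` and `d'_j − d_j`, then every VSP-feasible
schedule `t` extends to a full assignment of the MIP variables satisfying all
MIP constraints in which `∑_j l_j` equals the number of tardy vehicles
`#{j : t_j^{q_j} > d_j}`. -/
theorem vsp_feasible_extends_to_mip_solution
    {n : ℕ} {V : Type} (q : Fin n → ℕ) (hq : ∀ j, 0 < q j)
    (W : (j : Fin n) → Fin (q j) → V)
    (ρ d d' : Fin n → ℝ)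
    (τmin τmax : (j : Fin n) → Fin (q j) → ℝ)
    (s Msep : (j1 j2 : Fin n) → Fin (q j1) → Fin (q j2) → ℝ)
    (Mveh : Fin n → ℝ)
    (hs : ∀ (j1 j2 : Fin n) (i1 : Fin (q j1)) (i2 : Fin (q j2)),
        j1 ≠ j2 → W j1 i1 = W j2 i2 → 0 ≤ s j1 j2 i1 i2)
    (hMsep : ∀ (j1 j2 : Fin n) (i1 : Fin (q j1)) (i2 : Fin (q j2)),
        j1 ≠ j2 → W j1 i1 = W j2 i2 →
        ∀ j' j'' : Fin n, d' j' - ρ j'' ≤ Msep j1 j2 i1 i2)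
    (hMveh : ∀ j : Fin n, d j - ρ j ≤ Mveh j ∧ d' j - d j ≤ Mveh j)
    (t : (j : Fin n) → Fin (q j) → ℝ)
    (ht : VSPFeasible q hq W ρ d' τmin τmax s t) :
    ∃ (P N b : (j1 j2 : Fin n) → Fin (q j1) → Fin (q j2) → ℝ) (X l : Fin n → ℝ),
      MIPConstraints q hq W ρ d d' τmin τmax s Msep Mveh t P N b X l ∧
      ∑ j, l j =
        ((Finset.univ.filter
            (fun j : Fin n =>
              d j < t j ⟨q j - 1, Nat.sub_lt (hq j) Nat.one_pos⟩)).card : ℝ) :=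
  vsp_feasible_extends_to_mip_solution_general q hq W ρ d d' τmin τmax s Msep Mveh hMsep hMveh t ht
end
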